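/- arXiv:2102.03693 — 2 statements merged into one kernel-verified Lean document; each statement's English description precedes it below -/
import Mathlib

section
/- Let K be a field of characteristic zero, σ the K-automorphism of K(t) with σ(t) = t+1, and f = a/b ∈ K(t) with gcd(a,b) = 1. If p is an irreducible factor of b, then the local dispersion at p of σ(f) − f equals dis_p(f) + 1. -/
/-!
Write `σ = shiftPoly 1`, so that `Δf = (σa·b - a·σb) / (σb·b)`. In characteristic zero only
finitely many shifts `σ^i p` divide `b`; let `m` and `M` be the extreme indices, so that
`dis_p(b) = M - m`. The reduced denominator of `Δf` divides `σb·b`, whose shifts of `p` have indices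
in `[m, M + 1]`. Conversely `σ^m p` divides `b` but neither `a` nor `σb`, and `σ^(M+1) p` divides
`σb` but neither `σa` nor `b`; so neither divides the numerator `σa·b - a·σb`, both survive in the
reduced denominator, and its dispersion at `p` is `M + 1 - m`.
-/

open Polynomial
open scoped Classical

/-- The shift `σ^i` on `K[t]`, sending `q(t)` to `q(t + i)`. -/
noncomputable def shiftPoly {K : Type*} [Field K] (i : ℤ) (q : K[X]) : K[X] :=
  q.comp (X + C (i : K))

/-- The local dispersion of `u ∈ K[t]` at an irreducible `p`: the supremum of `|i - j|` over
integers `i, j` with `σ^i(p) ∣ u` and `σ^j(p) ∣ u` (`0` when no shift of `p` divides `u`),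
with `dis_p(0) = ⊤`. -/
noncomputable def locDisp {K : Type*} [Field K] (p u : K[X]) : ℕ∞ :=
  if u = 0 then ⊤
  else sSup {d : ℕ∞ | ∃ i j : ℤ, shiftPoly i p ∣ u ∧ shiftPoly j p ∣ u ∧
    d = ((i - j).natAbs : ℕ∞)}

lemma Prime.not_dvd_mul_sub_mul {R : Type*} [CommRing R] {q a b c d : R} (hq : Prime q)
    (hab : IsCoprime a b) (hqb : q ∣ b) (hqd : ¬ q ∣ d) : ¬ q ∣ c * b - a * d := by
  intro h
  have hqad : q ∣ a * d := by simpa using dvd_sub (hqb.mul_left c) h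
  rcases hq.dvd_or_dvd hqad with hqa | hqd'
  · exact hq.not_isUnit (hab.isUnit_of_dvd' hqa hqb)
  · exact hqd hqd'

lemma Prime.dvd_denom_div {K : Type*} [Field K] {q N D : K[X]} (hq : Prime q) (hD : D ≠ 0)
    (hqD : q ∣ D) (hqN : ¬ q ∣ N) :
    q ∣ (algebraMap K[X] (RatFunc K) N / algebraMap K[X] (RatFunc K) D).denom := by
  have hcross := (RatFunc.num_mul_eq_mul_denom_iff (p := N) hD).mpr rfl
  rcases hq.dvd_or_dvd (hcross ▸ hqD.mul_left _) with h | h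
  · exact absurd h hqN
  · exact h

section Shift

variable {K : Type*} [Field K]

lemma shiftPoly_eq_taylor (i : ℤ) (q : K[X]) : shiftPoly i q = taylor (i : K) q := rfl

@[simp]
lemma shiftPoly_zero (q : K[X]) : shiftPoly 0 q = q := by
  simp [shiftPoly_eq_taylor]

lemma shiftPoly_shiftPoly (i j : ℤ) (q : K[X]) :
    shiftPoly i (shiftPoly j q) = shiftPoly (i + j) q := by
  simp [shiftPoly_eq_taylor, taylor_taylor]

lemma shiftPoly_ne_zero {q : K[X]} (hq : q ≠ 0) (i : ℤ) : shiftPoly i q ≠ 0 := by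
  simpa [shiftPoly_eq_taylor] using hq

lemma shiftPoly_dvd_shiftPoly_iff {i : ℤ} {u v : K[X]} :
    shiftPoly i u ∣ shiftPoly i v ↔ u ∣ v :=
  map_dvd_iff (taylorEquiv (i : K))

lemma shiftPoly_dvd_shiftPoly_one_iff {i : ℤ} {p u : K[X]} :
    shiftPoly i p ∣ shiftPoly 1 u ↔ shiftPoly (i - 1) p ∣ u := by
  rw [← shiftPoly_dvd_shiftPoly_iff (i := 1) (u := shiftPoly (i - 1) p), shiftPoly_shiftPoly,
    add_sub_cancel]

lemma shiftPoly_add_one_dvd_shiftPoly_one {i : ℤ} {p u : K[X]} (h : shiftPoly i p ∣ u) :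
    shiftPoly (i + 1) p ∣ shiftPoly 1 u := by
  rwa [shiftPoly_dvd_shiftPoly_one_iff, add_sub_cancel_right]

lemma Irreducible.prime_shiftPoly {p : K[X]} (hp : Irreducible p) (i : ℤ) :
    Prime (shiftPoly i p) :=
  (hp.map (taylorEquiv (i : K))).prime

lemma IsCoprime.shiftPoly {a b : K[X]} (hab : IsCoprime a b) (i : ℤ) :
    IsCoprime (shiftPoly i a) (shiftPoly i b) :=
  hab.map (taylorEquiv (i : K)).toRingHom

lemma shiftPoly_dvd_shiftPoly_one_mul_iff {p b : K[X]} (hp : Irreducible p) (i : ℤ) :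
    shiftPoly i p ∣ shiftPoly 1 b * b ↔ shiftPoly (i - 1) p ∣ b ∨ shiftPoly i p ∣ b := by
  rw [(hp.prime_shiftPoly i).dvd_mul, shiftPoly_dvd_shiftPoly_one_iff]

/-- A root `α` of `p` gives the root `α - i` of `b` for every shift `σ^i p ∣ b`; these are
distinct in characteristic zero. -/
lemma finite_setOf_shiftPoly_dvd [CharZero K] {p b : K[X]} (hp : Irreducible p) (hb : b ≠ 0) :
    {i : ℤ | shiftPoly i p ∣ b}.Finite := by
  let φ := algebraMap K (AlgebraicClosure K)
  obtain ⟨α, hα⟩ := IsAlgClosed.exists_root (p.map φ)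
    (by rw [degree_map]; exact (degree_pos_of_irreducible hp).ne')
  have hroot : ∀ i ∈ {i : ℤ | shiftPoly i p ∣ b}, α - i ∈ (b.map φ).roots := by
    intro i hi
    rw [mem_roots (Polynomial.map_ne_zero hb)]
    refine IsRoot.dvd ?_ (Polynomial.map_dvd φ hi)
    simpa [shiftPoly_eq_taylor, taylor_eval] using hα
  have hinj : Function.Injective fun i : ℤ => α - (i : AlgebraicClosure K) :=
    sub_right_injective.comp Int.cast_injective
  refine Set.Finite.of_finite_image ?_ hinj.injOn
  exact (b.map φ).roots.finite_toSet.subset (Set.image_subset_iff.mpr hroot)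

lemma exists_shiftPoly_dvd_extremal [CharZero K] {p b : K[X]} (hp : Irreducible p) (hb : b ≠ 0)
    (hpb : p ∣ b) : ∃ m M : ℤ, shiftPoly m p ∣ b ∧ shiftPoly M p ∣ b ∧
      ∀ i, shiftPoly i p ∣ b → m ≤ i ∧ i ≤ M := by
  have hfin := finite_setOf_shiftPoly_dvd hp hb
  have hne : {i : ℤ | shiftPoly i p ∣ b}.Nonempty := ⟨0, by simpa using hpb⟩
  obtain ⟨m, hm, hmin⟩ := Set.exists_min_image _ id hfin hne
  obtain ⟨M, hM, hmax⟩ := Set.exists_max_image _ id hfin hne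
  exact ⟨m, M, hm, hM, fun i hi => ⟨hmin i hi, hmax i hi⟩⟩

lemma locDisp_eq_of_extremal {p u : K[X]} (hu : u ≠ 0) {m M : ℤ}
    (hm : shiftPoly m p ∣ u) (hM : shiftPoly M p ∣ u)
    (hext : ∀ i, shiftPoly i p ∣ u → m ≤ i ∧ i ≤ M) :
    locDisp p u = ((M - m).natAbs : ℕ∞) := by
  rw [locDisp, if_neg hu]
  refine le_antisymm (sSup_le ?_) (le_sSup ⟨M, m, hM, hm, rfl⟩)
  rintro d ⟨i, j, hi, hj, rfl⟩
  have := hext i hi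
  have := hext j hj
  exact_mod_cast (by omega : (i - j).natAbs ≤ (M - m).natAbs)

lemma shiftPoly_min_not_dvd_mul_sub_mul {a b p : K[X]} (hab : IsCoprime a b) (hp : Irreducible p)
    {m : ℤ} (hm : shiftPoly m p ∣ b) (hmin : ∀ i, shiftPoly i p ∣ b → m ≤ i) :
    ¬ shiftPoly m p ∣ shiftPoly 1 a * b - a * shiftPoly 1 b := by
  have hmσb : ¬ shiftPoly m p ∣ shiftPoly 1 b := by
    rw [shiftPoly_dvd_shiftPoly_one_iff]
    exact fun h => by have := hmin _ h; omega
  exact (hp.prime_shiftPoly m).not_dvd_mul_sub_mul hab hm hmσb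

lemma shiftPoly_max_succ_not_dvd_mul_sub_mul {a b p : K[X]} (hab : IsCoprime a b)
    (hp : Irreducible p) {M : ℤ} (hM : shiftPoly M p ∣ b)
    (hmax : ∀ i, shiftPoly i p ∣ b → i ≤ M) :
    ¬ shiftPoly (M + 1) p ∣ shiftPoly 1 a * b - a * shiftPoly 1 b := by
  have hMσb := shiftPoly_add_one_dvd_shiftPoly_one hM
  have hMb : ¬ shiftPoly (M + 1) p ∣ b := fun h => by have := hmax _ h; omega
  rw [← dvd_neg, neg_sub]
  exact (hp.prime_shiftPoly (M + 1)).not_dvd_mul_sub_mul (hab.shiftPoly 1) hMσb hMb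

end Shift

theorem locDisp_diff_general {K : Type*} [Field K] [CharZero K]
    (a b p : K[X]) (hb : b ≠ 0) (hab : IsCoprime a b)
    (hp : Irreducible p) (hpb : p ∣ b)
    (Δf : RatFunc K)
    (hΔf : Δf = algebraMap K[X] (RatFunc K) (shiftPoly 1 a) /
        algebraMap K[X] (RatFunc K) (shiftPoly 1 b) -
      algebraMap K[X] (RatFunc K) a / algebraMap K[X] (RatFunc K) b) :
    locDisp p Δf.denom = locDisp p b + 1 := by
  obtain ⟨m, M, hm, hM, hext⟩ := exists_shiftPoly_dvd_extremal hp hb hpb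
  have hσb : shiftPoly 1 b ≠ 0 := shiftPoly_ne_zero hb 1
  have hD : shiftPoly 1 b * b ≠ 0 := mul_ne_zero hσb hb
  replace hΔf : Δf = algebraMap K[X] (RatFunc K) (shiftPoly 1 a * b - a * shiftPoly 1 b) /
      algebraMap K[X] (RatFunc K) (shiftPoly 1 b * b) := by
    rw [hΔf, div_sub_div _ _ (RatFunc.algebraMap_ne_zero hσb) (RatFunc.algebraMap_ne_zero hb)]
    simp only [map_sub, map_mul]
    ring
  have hlow : shiftPoly m p ∣ Δf.denom :=
    hΔf ▸ (hp.prime_shiftPoly m).dvd_denom_div hD (hm.mul_left _)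
      (shiftPoly_min_not_dvd_mul_sub_mul hab hp hm fun i hi => (hext i hi).1)
  have hhigh : shiftPoly (M + 1) p ∣ Δf.denom :=
    hΔf ▸ (hp.prime_shiftPoly (M + 1)).dvd_denom_div hD
      ((shiftPoly_add_one_dvd_shiftPoly_one hM).mul_right _)
      (shiftPoly_max_succ_not_dvd_mul_sub_mul hab hp hM fun i hi => (hext i hi).2)
  have hbound : ∀ i, shiftPoly i p ∣ Δf.denom → m ≤ i ∧ i ≤ M + 1 := by
    intro i hi
    have hiD := hi.trans ((RatFunc.denom_dvd hD).mpr ⟨_, hΔf⟩)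
    rcases (shiftPoly_dvd_shiftPoly_one_mul_iff hp i).mp hiD with h | h <;>
      · have := hext _ h; omega
  rw [locDisp_eq_of_extremal Δf.denom_ne_zero hlow hhigh hbound,
    locDisp_eq_of_extremal hb hm hM hext]
  have := hext M hM
  norm_cast
  omega

/-- Let `f = a/b ∈ K(t)` with `gcd(a,b) = 1`. If `p` is an irreducible factor of `b`, then the
local dispersion at `p` of `Δ_t(f) = σ_t(f) - f` equals `dis_p(f) + 1`, where `dis_p` of a
rational function is the local dispersion of its reduced denominator. -/
theorem locDisp_diff {K : Type*} [Field K] [CharZero K]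
    (a b p : K[X]) (hb : b ≠ 0) (hab : IsCoprime a b)
    (hp : Irreducible p) (hpb : p ∣ b)
    (f Δf : RatFunc K)
    (hf : f = algebraMap K[X] (RatFunc K) a / algebraMap K[X] (RatFunc K) b)
    (hΔf : Δf = algebraMap K[X] (RatFunc K) (shiftPoly 1 a) /
        algebraMap K[X] (RatFunc K) (shiftPoly 1 b) -
      algebraMap K[X] (RatFunc K) a / algebraMap K[X] (RatFunc K) b) :
    locDisp p Δf.denom = locDisp p b + 1 :=
  locDisp_diff_general a b p hb hab hp hpb Δf hΔf
end

section
/- Let F be a field of characteristic zero and let H be a nonzero element of a difference field extension of F(t, x₁,…,x_m) with σ_t(H) = a·H for some a ∈ F(t, x₁,…,x_m), where σ_t is the shift t ↦ t+1. If there exist nonzero p ∈ F(x₁,…,x_m)[t] and r ∈ F(t) such that a = (σ_t(p)/p)·r, then H is annihilated by a nonzero linear recurrence operator Σ ℓ_i S_t^i with coefficients ℓ_i ∈ F(t). -/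
open Polynomial

/-- The natural embedding `F(t) → K(t)` induced by `F ⊆ K`. -/
noncomputable def liftRF {F K : Type*} [Field F] [Field K] [Algebra F K] :
    RatFunc F →+* RatFunc K :=
  RatFunc.mapRingHom (Polynomial.mapRingHom (algebraMap F K)) (by
    intro q hq
    simp only [Submonoid.mem_comap, Polynomial.coe_mapRingHom]
    exact mem_nonZeroDivisors_of_ne_zero
      ((Polynomial.map_ne_zero_iff (algebraMap F K).injective).mpr
        (nonZeroDivisors.ne_zero hq)))

/-- The shift `σ_t` on `K[t]`, sending `p(t)` to `p(t + 1)`. -/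
noncomputable def shiftP {K : Type*} [Field K] (p : Polynomial K) : Polynomial K :=
  p.comp (X + C 1)

/-!
Iterating `σ H = a H` gives `σʲ H = Aⱼ H` with `Aⱼ = ∏_{i<j} σⁱ a`, and the shape of `a` makes the
product telescope: `Aⱼ = σʲ(p) / p · Rⱼ` with `Rⱼ = ∏_{i<j} σⁱ r ∈ F(t)`. Writing
`p = Σₖ cₖ tᵏ`, we get `σʲ(p) = Σₖ cₖ (t + j)ᵏ` with `(t + j)ᵏ ∈ F[t]`, so every `Aⱼ` lies in the
`F(t)`-span of the finitely many `cₖ / p`. The `Aⱼ` are therefore linearly dependent over `F(t)`, and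
a dependence relation, multiplied by `H`, is the required recurrence.
-/

section Recurrence

variable {R V : Type*} [Field R] [AddCommGroup V] [Module R V]

theorem exists_ne_zero_sum_range_smul_eq_zero_of_mem_span {ι : Type*} [Finite ι] {v : ι → V}
    {x : ℕ → V} (hx : ∀ j, x j ∈ Submodule.span R (Set.range v)) :
    ∃ (ρ : ℕ) (ℓ : ℕ → R), ℓ ρ ≠ 0 ∧ ∑ j ∈ Finset.range (ρ + 1), ℓ j • x j = 0 := by
  set W := Submodule.span R (Set.range v)
  have : FiniteDimensional R W := FiniteDimensional.span_of_finite R (Set.finite_range v)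
  let φ : R[X] →ₗ[R] W := (lsum fun j => LinearMap.toSpanSingleton R V (x j)).codRestrict W
    fun q => Submodule.sum_mem _ fun j _ => W.smul_mem _ (hx j)
  have hφ : ¬ Function.Injective φ := fun h => not_finite (Module.Finite.of_injective φ h)
  obtain ⟨q, hq, hq0⟩ : ∃ q, φ q = 0 ∧ q ≠ 0 := by
    simpa [injective_iff_map_eq_zero] using hφ
  refine ⟨q.natDegree, q.coeff, leadingCoeff_ne_zero.mpr hq0, ?_⟩
  have hφq : (φ q : V) = q.sum fun j c => c • x j := rfl
  rw [← sum_over_range q (f := fun j c => c • x j) fun j => zero_smul R (x j), ← hφq, hq,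
    Submodule.coe_zero]

end Recurrence

section Shift

variable {K : Type*} [Field K]

theorem shiftP_eq_taylor (p : K[X]) : shiftP p = taylor 1 p :=
  (taylor_apply ..).symm

noncomputable def shiftRF (K : Type*) [Field K] : RatFunc K →+* RatFunc K :=
  RatFunc.mapRingHom (taylorAlgHom (1 : K)) fun q hq => by
    simp only [Submonoid.mem_comap]
    exact mem_nonZeroDivisors_of_ne_zero
      ((taylor_eq_zero 1 (f := q)).not.mpr (nonZeroDivisors.ne_zero hq))

theorem shiftRF_div (u v : K[X]) :
    shiftRF K (algebraMap _ _ u / algebraMap _ _ v) =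
      algebraMap _ _ (taylor 1 u) / algebraMap _ _ (taylor 1 v) := by
  rw [shiftRF, RatFunc.coe_mapRingHom_eq_coe_map, RatFunc.map_apply_div]
  rfl

theorem shiftRF_algebraMap (u : K[X]) :
    shiftRF K (algebraMap _ _ u) = algebraMap _ _ (taylor 1 u) := by
  simpa using shiftRF_div u 1

end Shift

section Lift

variable {F K : Type*} [Field F] [Field K] [Algebra F K]

theorem liftRF_div (u v : F[X]) :
    (liftRF (algebraMap F[X] (RatFunc F) u / algebraMap _ _ v) : RatFunc K) =
      algebraMap _ _ (u.map (algebraMap F K)) / algebraMap _ _ (v.map (algebraMap F K)) := by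
  rw [liftRF, RatFunc.coe_mapRingHom_eq_coe_map, RatFunc.map_apply_div]
  rfl

theorem liftRF_algebraMap (u : F[X]) :
    (liftRF (algebraMap F[X] (RatFunc F) u) : RatFunc K) =
      algebraMap _ _ (u.map (algebraMap F K)) := by
  simpa using liftRF_div (K := K) u 1

theorem shiftRF_liftRF (f : RatFunc F) : shiftRF K (liftRF f) = liftRF (shiftRF F f) := by
  rw [← RatFunc.num_div_denom f, liftRF_div, shiftRF_div, shiftRF_div, liftRF_div]
  simp only [map_taylor, map_one]

end Lift

noncomputable def shiftProd {K : Type*} [Field K] (a : RatFunc K) : ℕ → RatFunc K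
  | 0 => 1
  | j + 1 => shiftRF K (shiftProd a j) * a

noncomputable abbrev liftRFAlgebra {F K : Type*} [Field F] [Field K] [Algebra F K] :
    Algebra (RatFunc F) (RatFunc K) :=
  liftRF.toAlgebra

attribute [local instance] liftRFAlgebra

section Span

variable {F K : Type*} [Field F] [Field K] [Algebra F K]

theorem shiftProd_mul_algebraMap {a : RatFunc K} {p : K[X]} {r : RatFunc F}
    (ha : a * algebraMap _ _ p = algebraMap _ _ (taylor 1 p) * liftRF r) (j : ℕ) :
    shiftProd a j * algebraMap _ _ p =
      algebraMap _ _ (taylor (j : K) p) * liftRF (shiftProd r j) := by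
  induction j with
  | zero => simp [shiftProd]
  | succ j ih =>
    have hshift := congrArg (shiftRF K) ih
    rw [map_mul, map_mul, shiftRF_algebraMap, shiftRF_algebraMap, shiftRF_liftRF,
      taylor_taylor] at hshift
    calc shiftProd a (j + 1) * algebraMap _ _ p
        = shiftRF K (shiftProd a j) * algebraMap _ _ (taylor 1 p) * liftRF r := by
          rw [shiftProd, mul_assoc, ha, mul_assoc]
      _ = _ := by rw [hshift, shiftProd, map_mul, Nat.cast_succ, add_comm, mul_assoc]

theorem algebraMap_taylor_natCast_eq_sum (j : ℕ) (p : K[X]) :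
    (algebraMap _ _ (taylor (j : K) p) : RatFunc K) = ∑ k ∈ Finset.range (p.natDegree + 1),
      algebraMap _ _ (C (p.coeff k)) *
        liftRF (algebraMap F[X] (RatFunc F) ((X + C (j : F)) ^ k)) := by
  conv_lhs => rw [p.as_sum_range_C_mul_X_pow, map_sum, map_sum]
  refine Finset.sum_congr rfl fun k _ => ?_
  rw [liftRF_algebraMap, ← map_mul]
  simp [Polynomial.map_pow]

theorem shiftProd_mem_span {a : RatFunc K} {p : K[X]} (hp : p ≠ 0) {r : RatFunc F}
    (ha : a * algebraMap _ _ p = algebraMap _ _ (taylor 1 p) * liftRF r) (j : ℕ) :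
    shiftProd a j ∈ Submodule.span (RatFunc F)
      (Set.range fun k : Fin (p.natDegree + 1) =>
        algebraMap _ _ (C (p.coeff k)) / algebraMap _ _ p) := by
  have hP : (algebraMap K[X] (RatFunc K) p) ≠ 0 := RatFunc.algebraMap_ne_zero hp
  have hexp : shiftProd a j = ∑ k ∈ Finset.range (p.natDegree + 1),
      (shiftProd r j * algebraMap F[X] (RatFunc F) ((X + C (j : F)) ^ k)) •
        (algebraMap _ _ (C (p.coeff k)) / algebraMap _ _ p) := by
    calc shiftProd a j = shiftProd a j * algebraMap _ _ p / algebraMap _ _ p :=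
          (mul_div_cancel_right₀ _ hP).symm
      _ = algebraMap _ _ (taylor (j : K) p) * liftRF (shiftProd r j) / algebraMap _ _ p := by
          rw [shiftProd_mul_algebraMap ha]
      _ = _ := by
          rw [algebraMap_taylor_natCast_eq_sum (F := F), Finset.sum_mul, Finset.sum_div]
          refine Finset.sum_congr rfl fun k _ => ?_
          rw [Algebra.smul_def, RingHom.algebraMap_toAlgebra, map_mul]
          ring
  rw [hexp]
  exact Submodule.sum_mem _ fun k hk =>
    Submodule.smul_mem _ _ (Submodule.subset_span ⟨⟨k, Finset.mem_range.mp hk⟩, rfl⟩)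

end Span

section DifferenceField

variable {K L : Type*} [Field K] [Field L] {ι : RatFunc K →+* L} {σ : L ≃+* L}

theorem apply_map_eq_map_shiftRF
    (hσι : ∀ u v : K[X], σ (ι (algebraMap _ _ u / algebraMap _ _ v)) =
      ι (algebraMap _ _ (shiftP u) / algebraMap _ _ (shiftP v)))
    (f : RatFunc K) : σ (ι f) = ι (shiftRF K f) := by
  rw [← RatFunc.num_div_denom f, hσι, shiftRF_div, shiftP_eq_taylor, shiftP_eq_taylor]

theorem pow_apply_eq_map_shiftProd_mul (hσ : ∀ f, σ (ι f) = ι (shiftRF K f)) {H : L}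
    {a : RatFunc K} (hHa : σ H = ι a * H) (j : ℕ) : (σ ^ j) H = ι (shiftProd a j) * H := by
  induction j with
  | zero => simp [shiftProd]
  | succ j ih =>
    rw [pow_succ', RingAut.mul_apply, ih, map_mul, hσ, hHa, shiftProd, map_mul, mul_assoc]

end DifferenceField

theorem hypergeometric_St_separable_general {F : Type*} [Field F] (m : ℕ)
    {L : Type*} [Field L]
    (ι : RatFunc (FractionRing (MvPolynomial (Fin m) F)) →+* L)
    (σ : L ≃+* L)
    (hσι : ∀ u v : Polynomial (FractionRing (MvPolynomial (Fin m) F)),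
      σ (ι (algebraMap _ _ u / algebraMap _ _ v)) =
        ι (algebraMap _ _ (shiftP u) / algebraMap _ _ (shiftP v)))
    (H : L)
    (a : RatFunc (FractionRing (MvPolynomial (Fin m) F)))
    (hHa : σ H = ι a * H)
    (p : Polynomial (FractionRing (MvPolynomial (Fin m) F))) (hp : p ≠ 0)
    (r : RatFunc F)
    (ha : a = algebraMap _ _ (shiftP p) / algebraMap _ _ p * liftRF r) :
    ∃ (ρ : ℕ) (ℓ : ℕ → RatFunc F), ℓ ρ ≠ 0 ∧
      ∑ j ∈ Finset.range (ρ + 1), ι (liftRF (ℓ j)) * (σ ^ j) H = 0 := by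
  have haP : a * algebraMap _ _ p = algebraMap _ _ (taylor 1 p) * liftRF r := by
    rw [ha, shiftP_eq_taylor, div_mul_eq_mul_div,
      div_mul_cancel₀ _ (RatFunc.algebraMap_ne_zero hp)]
  obtain ⟨ρ, ℓ, hℓ, hsum⟩ :=
    exists_ne_zero_sum_range_smul_eq_zero_of_mem_span (shiftProd_mem_span hp haP)
  refine ⟨ρ, ℓ, hℓ, ?_⟩
  simp only [pow_apply_eq_map_shiftProd_mul (apply_map_eq_map_shiftRF hσι) hHa, ← mul_assoc,
    ← map_mul, ← Finset.sum_mul, ← map_sum]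
  simp only [Algebra.smul_def, RingHom.algebraMap_toAlgebra] at hsum
  rw [hsum, map_zero, zero_mul]

/-- Hypergeometric case. Let `K = F(x₁, …, x_m)` and let `L` be a difference field
extension of `F(t, x₁, …, x_m) = K(t)` via `ι`, whose automorphism `σ` restricts to the
shift `t ↦ t + 1` on `K(t)` (acting on reduced numerators and denominators and fixing
`K`). Let `H ∈ L` be a nonzero hypergeometric term: `σ(H) = a·H` with `a ∈ K(t)`. If
there are a nonzero `p ∈ F(x₁,…,x_m)[t] = K[t]` and `r ∈ F(t)` with `a = (σ_t(p)/p)·r`,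
then `H` is annihilated by a nonzero recurrence operator `Σ ℓ_j S_t^j`, `ℓ_j ∈ F(t)`. -/
theorem hypergeometric_St_separable {F : Type*} [Field F] [CharZero F] (m : ℕ)
    {L : Type*} [Field L]
    (ι : RatFunc (FractionRing (MvPolynomial (Fin m) F)) →+* L)
    (σ : L ≃+* L)
    (hσι : ∀ u v : Polynomial (FractionRing (MvPolynomial (Fin m) F)),
      σ (ι (algebraMap _ _ u / algebraMap _ _ v)) =
        ι (algebraMap _ _ (shiftP u) / algebraMap _ _ (shiftP v)))
    (H : L) (hH : H ≠ 0)
    (a : RatFunc (FractionRing (MvPolynomial (Fin m) F)))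
    (hHa : σ H = ι a * H)
    (p : Polynomial (FractionRing (MvPolynomial (Fin m) F))) (hp : p ≠ 0)
    (r : RatFunc F)
    (ha : a = algebraMap _ _ (shiftP p) / algebraMap _ _ p * liftRF r) :
    ∃ (ρ : ℕ) (ℓ : ℕ → RatFunc F), ℓ ρ ≠ 0 ∧
      ∑ j ∈ Finset.range (ρ + 1), ι (liftRF (ℓ j)) * (σ ^ j) H = 0 :=
  hypergeometric_St_separable_general m ι σ hσι H a hHa p hp r ha
end
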